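/- Let N ≥ 1, σ > 0, and let ψ : [0,2] → ℝ be a nonnegative strictly decreasing C¹ function with ψ(2) = 0. Suppose x_i, v_i : [0,∞) → ℝ³ (1 ≤ i ≤ N) form a solution of the Cucker–Smale type flocking model on the unit sphere with inter-particle bonding force, i.e., ‖x_i(t)‖ = 1, ⟨x_i(t), v_i(t)⟩ = 0, x_i(t) ≠ −x_k(t) for all i, k and t ≥ 0, and ẋ_i = v_i, v̇_i = −‖v_i‖² x_i + (1/N) Σ_{k=1}^N ψ_{ik} (R_{x_k→x_i}(v_k) − v_i) + (σ/N) Σ_{k=1}^N (x_k − ⟨x_i,x_k⟩ x_i), where ψ_{ik} := ψ(‖x_i − x_k‖). Fix t > 0 and suppose there is a constant ψ_m > 0 such that ψ_{ij}(s) ≥ ψ_m for all 1 ≤ i, j ≤ N and all s ∈ [0, t]. Then, with 𝒱(s) := max_k ‖v_k(s)‖, 𝒟ₓ(s) := max_{i,j} ‖x_i(s) − x_j(s)‖, and E_K(s) := (1/N) Σ_{k=1}^N ‖v_k(s)‖², one has 𝒱²(t) ≤ e^{−ψ_m t/2} 𝒱²(0) + (1 − e^{−ψ_m t/2}) ( 2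 sup_{0 ≤ s ≤ t} E_K(s) + (4σ²/ψ_m²) sup_{0 ≤ s ≤ t} 𝒟ₓ²(s) ). -/

import Mathlib

open Matrix Set
open scoped BigOperators

noncomputable section

/-- The Euclidean norm on `ℝ³`, realized as `Fin 3 → ℝ`. -/
def enorm3 (a : Fin 3 → ℝ) : ℝ := Real.sqrt (a ⬝ᵥ a)

/-- The cross product on `ℝ³`. -/
def cross3 (a b : Fin 3 → ℝ) : Fin 3 → ℝ :=
  ![a 1 * b 2 - a 2 * b 1, a 2 * b 0 - a 0 * b 2, a 0 * b 1 - a 1 * b 0]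

/-- The unit vector `u = (z₁ × z₂)/‖z₁ × z₂‖`. -/
def uvec3 (z₁ z₂ : Fin 3 → ℝ) : Fin 3 → ℝ := (enorm3 (cross3 z₁ z₂))⁻¹ • cross3 z₁ z₂

/-- The rotation matrix `R(z₁,z₂) = ⟨z₁,z₂⟩ I + z₂ z₁ᵀ − z₁ z₂ᵀ + (1 − ⟨z₁,z₂⟩) u uᵀ`. -/
def rotMatrix (z₁ z₂ : Fin 3 → ℝ) : Matrix (Fin 3) (Fin 3) ℝ :=
  (z₁ ⬝ᵥ z₂) • (1 : Matrix (Fin 3) (Fin 3) ℝ)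
    + vecMulVec z₂ z₁ - vecMulVec z₁ z₂
    + (1 - z₁ ⬝ᵥ z₂) • vecMulVec (uvec3 z₁ z₂) (uvec3 z₁ z₂)

/-- `R_{z₁→z₂}(v)`, with the convention `R_{z→z} = I`. -/
def rotApply (z₁ z₂ v : Fin 3 → ℝ) : Fin 3 → ℝ :=
  if z₁ = z₂ then v else (rotMatrix z₁ z₂).mulVec v

/-!
Let `W = 𝒱²` be the largest of the `‖v_k‖²`. At an index `i` attaining it,
`d/ds ‖v_i‖² = 2⟨v_i, v̇_i⟩`. The centripetal term drops out since `v_i ⊥ x_i`. Since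
`R_{x_k→x_i}` is an isometry, each alignment term satisfies
`ψ_ik (⟨v_i, R v_k⟩ - ‖v_i‖²) ≤ ψ_m (‖v_k‖² - ‖v_i‖²) / 2`, which averages to `ψ_m (E_K - W) / 2`.
The bonding term is at most `|σ| 𝒱 𝒟ₓ ≤ ψ_m W / 4 + σ² 𝒟ₓ² / ψ_m` (Young). Hence the right Dini
derivative of `W`, a maximum of finitely many differentiable functions, is at most
`-(ψ_m/2) W + (ψ_m/2) (2 sup E_K + (4σ²/ψ_m²) sup 𝒟ₓ²)`, and Grönwall's inequality concludes.
-/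

open Filter Topology

lemma enorm3_eq_norm (a : Fin 3 → ℝ) :
    enorm3 a = ‖(WithLp.toLp 2 a : EuclideanSpace ℝ (Fin 3))‖ := by
  simp [enorm3, EuclideanSpace.norm_eq, dotProduct, sq]

lemma dotProduct_eq_inner {n : Type*} [Fintype n] (a b : n → ℝ) :
    a ⬝ᵥ b = inner ℝ (WithLp.toLp 2 a : EuclideanSpace ℝ n) (WithLp.toLp 2 b) := by
  simp [EuclideanSpace.inner_toLp_toLp, dotProduct_comm]

lemma enorm3_nonneg (a : Fin 3 → ℝ) : 0 ≤ enorm3 a := Real.sqrt_nonneg _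

lemma enorm3_sq (a : Fin 3 → ℝ) : enorm3 a ^ 2 = a ⬝ᵥ a :=
  Real.sq_sqrt (Fintype.sum_nonneg fun i => mul_self_nonneg (a i))

lemma abs_dotProduct_le_enorm3_mul (a b : Fin 3 → ℝ) : |a ⬝ᵥ b| ≤ enorm3 a * enorm3 b := by
  rw [dotProduct_eq_inner, enorm3_eq_norm, enorm3_eq_norm]
  exact abs_real_inner_le_norm _ _

lemma enorm3_sub_le (a b : Fin 3 → ℝ) : enorm3 (a - b) ≤ enorm3 a + enorm3 b := by
  simpa [enorm3_eq_norm] using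
    norm_sub_le (WithLp.toLp 2 a : EuclideanSpace ℝ (Fin 3)) (WithLp.toLp 2 b)

lemma enorm3_sub_le_two {a b : Fin 3 → ℝ} (ha : enorm3 a = 1) (hb : enorm3 b = 1) :
    enorm3 (a - b) ≤ 2 := by
  linarith [enorm3_sub_le a b]

lemma isGreatest_range_dotProduct_self {ι : Type*} {w : ι → Fin 3 → ℝ} {V : ℝ}
    (hV : IsGreatest (range fun k => enorm3 (w k)) V) :
    IsGreatest (range fun k => w k ⬝ᵥ w k) (V ^ 2) := by
  obtain ⟨⟨k, hk⟩, hmax⟩ := hV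
  refine ⟨⟨k, by simp only [← enorm3_sq, hk]⟩, ?_⟩
  rintro _ ⟨j, rfl⟩
  simpa only [← enorm3_sq] using pow_le_pow_left₀ (enorm3_nonneg _) (hmax ⟨j, rfl⟩) 2

lemma HasDerivAt.dotProduct_self {n : Type*} [Fintype n] {g : ℝ → n → ℝ} {g' : n → ℝ} {s : ℝ}
    (h : HasDerivAt g g' s) : HasDerivAt (fun t => g t ⬝ᵥ g t) (2 * (g s ⬝ᵥ g')) s := by
  have hc := hasDerivAt_pi.mp h
  refine (HasDerivAt.fun_sum (u := Finset.univ) fun i _ => (hc i).fun_mul (hc i)).congr_deriv ?_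
  simp only [dotProduct, Finset.mul_sum]
  exact Finset.sum_congr rfl fun i _ => by ring

lemma cross3_eq_crossProduct (a b : Fin 3 → ℝ) : cross3 a b = a ⨯₃ b := (cross_apply a b).symm

-- Rodrigues' formula: rotation about `u` by the angle `θ` with `cos θ = ⟨z₁, z₂⟩`.
lemma rotApply_of_ne {z₁ z₂ : Fin 3 → ℝ} (w : Fin 3 → ℝ) (h : z₁ ≠ z₂) :
    rotApply z₁ z₂ w = (z₁ ⬝ᵥ z₂) • w + (z₁ ⨯₃ z₂) ⨯₃ w
      + ((1 - z₁ ⬝ᵥ z₂) * (uvec3 z₁ z₂ ⬝ᵥ w)) • uvec3 z₁ z₂ := by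
  have hvv (a b : Fin 3 → ℝ) : vecMulVec a b *ᵥ w = (b ⬝ᵥ w) • a := by
    ext i; simp [mulVec, dotProduct, vecMulVec_apply, Finset.mul_sum, mul_comm, mul_left_comm]
  rw [rotApply, if_neg h, rotMatrix, cross_cross_eq_smul_sub_smul]
  simp only [add_mulVec, sub_mulVec, smul_mulVec, one_mulVec, hvv, smul_smul]
  abel

lemma crossProduct_ne_zero {z₁ z₂ : Fin 3 → ℝ} (hz₁ : z₁ ⬝ᵥ z₁ = 1) (hz₂ : z₂ ⬝ᵥ z₂ = 1)
    (h : z₁ ≠ z₂) (hne : z₁ ≠ -z₂) : z₁ ⨯₃ z₂ ≠ 0 := by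
  intro h0
  have hc : (z₁ ⬝ᵥ z₂) ^ 2 = 1 := by
    have := cross_dot_cross z₁ z₂ z₁ z₂
    rw [h0, zero_dotProduct, hz₁, hz₂, dotProduct_comm z₂] at this
    linarith
  rcases sq_eq_one_iff.mp hc with hc | hc
  · refine h (sub_eq_zero.mp (dotProduct_self_eq_zero.mp ?_))
    simp only [sub_dotProduct, dotProduct_sub, hz₁, hz₂, dotProduct_comm z₂, hc]; ring
  · refine hne (sub_eq_zero.mp (dotProduct_self_eq_zero.mp ?_))
    simp only [sub_dotProduct, dotProduct_sub, neg_dotProduct, dotProduct_neg, hz₁, hz₂,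
      dotProduct_comm z₂, hc]; ring

lemma dotProduct_rotApply_self {z₁ z₂ : Fin 3 → ℝ} (w : Fin 3 → ℝ) (hz₁ : z₁ ⬝ᵥ z₁ = 1)
    (hz₂ : z₂ ⬝ᵥ z₂ = 1) (hne : z₁ ≠ -z₂) :
    rotApply z₁ z₂ w ⬝ᵥ rotApply z₁ z₂ w = w ⬝ᵥ w := by
  by_cases h : z₁ = z₂
  · rw [rotApply, if_pos h]
  rw [rotApply_of_ne w h, uvec3, cross3_eq_crossProduct]
  set n := z₁ ⨯₃ z₂
  set c := z₁ ⬝ᵥ z₂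
  set l := (enorm3 n)⁻¹
  have hnn : n ⬝ᵥ n = 1 - c ^ 2 := by
    rw [cross_dot_cross, hz₁, hz₂, dotProduct_comm z₂]; ring
  have hl : l ^ 2 * (n ⬝ᵥ n) = 1 := by
    rw [inv_pow, enorm3_sq, inv_mul_cancel₀]
    exact dotProduct_self_eq_zero.not.mpr (crossProduct_ne_zero hz₁ hz₂ h hne)
  have hnw := cross_dot_cross n w n w
  rw [dotProduct_comm w n] at hnw
  have h₁ : n ⨯₃ w ⬝ᵥ w = 0 := by rw [dotProduct_comm, dot_cross_self]
  have h₂ : n ⨯₃ w ⬝ᵥ n = 0 := by rw [dotProduct_comm, dot_self_cross]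
  simp only [add_dotProduct, dotProduct_add, smul_dotProduct, dotProduct_smul, smul_eq_mul,
    dot_self_cross, dot_cross_self, h₁, h₂, dotProduct_comm w n]
  -- `‖R w‖² = c² ‖w‖² + ‖n × w‖² + (1 - c²) l² ⟨n, w⟩²` and `‖n × w‖² = ‖n‖² ‖w‖² - ⟨n, w⟩²`
  linear_combination (w ⬝ᵥ w - l ^ 2 * (n ⬝ᵥ w) ^ 2) * hnn
    + ((n ⬝ᵥ w) ^ 2 + (1 - c) ^ 2 * l ^ 2 * (n ⬝ᵥ w) ^ 2) * hl + hnw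

def flockingField (ψ : ℝ → ℝ) (σ : ℝ) {N : ℕ} (x v : Fin N → Fin 3 → ℝ) (i : Fin N) :
    Fin 3 → ℝ :=
  (-(enorm3 (v i))^2) • x i
    + (N : ℝ)⁻¹ • ∑ k, ψ (enorm3 (x i - x k)) • (rotApply (x k) (x i) (v k) - v i)
    + (σ / N) • ∑ k, (x k - ((x i) ⬝ᵥ (x k)) • x i)

lemma dotProduct_flockingField (ψ : ℝ → ℝ) (σ : ℝ) {N : ℕ} (x v : Fin N → Fin 3 → ℝ) (i : Fin N)
    (hxv : v i ⬝ᵥ x i = 0) :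
    v i ⬝ᵥ flockingField ψ σ x v i
      = (N : ℝ)⁻¹ * ∑ k, ψ (enorm3 (x i - x k)) * (v i ⬝ᵥ rotApply (x k) (x i) (v k) - v i ⬝ᵥ v i)
        + (N : ℝ)⁻¹ * ∑ k, σ * (v i ⬝ᵥ (x k - x i)) := by
  simp only [flockingField, dotProduct_add, dotProduct_smul, dotProduct_sum, dotProduct_sub,
    smul_eq_mul, hxv, mul_zero, sub_zero, zero_add, div_eq_inv_mul, mul_assoc, Finset.mul_sum]

lemma inv_mul_sum_le_of_le {N : ℕ} [NeZero N] {f : Fin N → ℝ} {B : ℝ} (h : ∀ k, f k ≤ B) :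
    (N : ℝ)⁻¹ * ∑ k, f k ≤ B := by
  have hN : (0 : ℝ) < N := Nat.cast_pos.mpr (NeZero.pos N)
  rw [inv_mul_le_iff₀ hN]
  simpa using Finset.sum_le_sum fun k (_ : k ∈ Finset.univ) => h k

lemma mul_dotProduct_sub_self_le {n : Type*} [Fintype n] {a b : n → ℝ} {p q : ℝ}
    (hq : 0 ≤ q) (hqp : q ≤ p) (hba : b ⬝ᵥ b ≤ a ⬝ᵥ a) :
    p * (a ⬝ᵥ b - a ⬝ᵥ a) ≤ q * ((b ⬝ᵥ b - a ⬝ᵥ a) / 2) := by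
  have hab : a ⬝ᵥ b - a ⬝ᵥ a ≤ (b ⬝ᵥ b - a ⬝ᵥ a) / 2 := by
    have : 0 ≤ (a - b) ⬝ᵥ (a - b) := Finset.sum_nonneg fun j _ => mul_self_nonneg ((a - b) j)
    simp only [sub_dotProduct, dotProduct_sub, dotProduct_comm b a] at this
    linarith
  calc p * (a ⬝ᵥ b - a ⬝ᵥ a) ≤ p * ((b ⬝ᵥ b - a ⬝ᵥ a) / 2) := by gcongr; linarith
    _ ≤ q * ((b ⬝ᵥ b - a ⬝ᵥ a) / 2) := mul_le_mul_of_nonpos_right hqp (by linarith)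

lemma two_mul_dotProduct_flockingField_le (ψ : ℝ → ℝ) (σ : ℝ) {N : ℕ} (x v : Fin N → Fin 3 → ℝ)
    (i : Fin N) {ψm D E : ℝ} (hψm : 0 < ψm) (hx : ∀ k, x k ⬝ᵥ x k = 1) (hxv : v i ⬝ᵥ x i = 0)
    (hanti : ∀ k, x k ≠ -x i) (hψ : ∀ k, ψm ≤ ψ (enorm3 (x i - x k)))
    (hmax : ∀ k, v k ⬝ᵥ v k ≤ v i ⬝ᵥ v i) (hD : ∀ k, enorm3 (x k - x i) ≤ D)
    (hE : (N : ℝ)⁻¹ * ∑ k, v k ⬝ᵥ v k ≤ E) :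
    2 * (v i ⬝ᵥ flockingField ψ σ x v i)
      ≤ -(ψm / 2) * (v i ⬝ᵥ v i) + ψm / 2 * (2 * E + 4 * σ ^ 2 / ψm ^ 2 * D ^ 2) := by
  have : NeZero N := ⟨Fin.pos_iff_nonempty.mpr ⟨i⟩ |>.ne'⟩
  have hN : (N : ℝ)⁻¹ * N = 1 := inv_mul_cancel₀ (NeZero.ne _)
  have halign : (N : ℝ)⁻¹ * ∑ k, ψ (enorm3 (x i - x k)) *
      (v i ⬝ᵥ rotApply (x k) (x i) (v k) - v i ⬝ᵥ v i)
        ≤ ψm / 2 * ((N : ℝ)⁻¹ * ∑ k, v k ⬝ᵥ v k - v i ⬝ᵥ v i) := by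
    calc _ ≤ (N : ℝ)⁻¹ * ∑ k, ψm * ((v k ⬝ᵥ v k - v i ⬝ᵥ v i) / 2) := by
          refine mul_le_mul_of_nonneg_left (Finset.sum_le_sum fun k _ => ?_) (by positivity)
          rw [← dotProduct_rotApply_self (v k) (hx k) (hx i) (hanti k)]
          refine mul_dotProduct_sub_self_le hψm.le (hψ k) ?_
          rw [dotProduct_rotApply_self (v k) (hx k) (hx i) (hanti k)]
          exact hmax k
      _ = _ := by
          rw [← Finset.mul_sum, ← Finset.sum_div, Finset.sum_sub_distrib, Finset.sum_const,
            Finset.card_univ, Fintype.card_fin, nsmul_eq_mul]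
          linear_combination (-(ψm / 2) * (v i ⬝ᵥ v i)) * hN
  have hbond : (N : ℝ)⁻¹ * ∑ k, σ * (v i ⬝ᵥ (x k - x i)) ≤ |σ| * enorm3 (v i) * D := by
    refine inv_mul_sum_le_of_le fun k => ?_
    calc σ * (v i ⬝ᵥ (x k - x i)) ≤ |σ| * |v i ⬝ᵥ (x k - x i)| := by
          rw [← abs_mul]; exact le_abs_self _
      _ ≤ |σ| * (enorm3 (v i) * D) := by
          gcongr
          exact (abs_dotProduct_le_enorm3_mul _ _).trans
            (mul_le_mul_of_nonneg_left (hD k) (enorm3_nonneg _))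
      _ = |σ| * enorm3 (v i) * D := by ring
  have hyoung : 2 * (|σ| * enorm3 (v i) * D)
      ≤ ψm / 2 * enorm3 (v i) ^ 2 + 2 * σ ^ 2 / ψm * D ^ 2 := by
    rw [← sq_abs σ]
    have := sq_nonneg (ψm * enorm3 (v i) - 2 * |σ| * D)
    field_simp
    nlinarith
  have hE' := mul_le_mul_of_nonneg_left hE (half_pos hψm).le
  have hD' : ψm / 2 * (4 * σ ^ 2 / ψm ^ 2 * D ^ 2) = 2 * σ ^ 2 / ψm * D ^ 2 := by
    field_simp; ring
  rw [dotProduct_flockingField ψ σ x v i hxv, ← enorm3_sq (v i)]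
  rw [← enorm3_sq (v i)] at halign
  linarith

lemma frequently_slope_lt_of_isGreatest {ι : Type*} [Finite ι] {f : ι → ℝ → ℝ} {f' : ι → ℝ}
    {W : ℝ → ℝ} {s r : ℝ} (hW : ∀ z, IsGreatest (range fun k => f k z) (W z))
    (hf : ∀ k, HasDerivAt (f k) (f' k) s) (hr : ∀ k, f k s = W s → f' k < r) :
    ∃ᶠ z in 𝓝[>] s, (z - s)⁻¹ * (W z - W s) < r := by
  -- some single member of the family attains the maximum at points arbitrarily close to the right
  obtain ⟨k, hk⟩ : ∃ k, ∃ᶠ z in 𝓝[>] s, W z = f k z := by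
    rw [← Filter.frequently_exists]
    exact Filter.Frequently.of_forall fun z => (hW z).1.imp fun k hk => hk.symm
  have hks : f k s = W s := by
    obtain ⟨j, hj⟩ := (hW s).1
    refine le_antisymm ((hW s).2 ⟨k, rfl⟩) (hj ▸ ?_)
    have hlim := ((hf k).continuousAt.sub (hf j).continuousAt).tendsto.mono_left
      (nhdsWithin_le_nhds (s := Ioi s))
    exact sub_nonneg.mp (isClosed_Ici.mem_of_frequently_of_tendsto
      (hk.mono fun z hz => sub_nonneg.mpr (hz ▸ (hW z).2 ⟨j, rfl⟩)) hlim)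
  have hslope : ∀ᶠ z in 𝓝[>] s, slope (f k) s z < r :=
    ((hasDerivAt_iff_tendsto_slope.mp (hf k)).mono_left
      (nhdsWithin_mono s fun z hz => ne_of_gt hz)).eventually_lt_const (hr k hks)
  refine (hk.and_eventually hslope).mono fun z ⟨hWz, hz⟩ => ?_
  rwa [slope_def_field, ← hWz, hks, div_eq_inv_mul] at hz

lemma continuousOn_of_isGreatest {ι : Type*} [Fintype ι] {f : ι → ℝ → ℝ} {W : ℝ → ℝ}
    {S : Set ℝ} (hW : ∀ z, IsGreatest (range fun k => f k z) (W z))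
    (hf : ∀ k, ContinuousOn (f k) S) : ContinuousOn W S := by
  obtain ⟨k₀, -⟩ := (hW 0).1
  have hne : (Finset.univ : Finset ι).Nonempty := ⟨k₀, Finset.mem_univ k₀⟩
  refine (ContinuousOn.finset_sup'_apply hne fun k _ => hf k).congr fun z _ => ?_
  obtain ⟨k, -, hk⟩ := Finset.exists_mem_eq_sup' hne fun k => f k z
  exact (hW z).unique
    ⟨⟨k, hk.symm⟩, fun _ ⟨j, hj⟩ => hj ▸ Finset.le_sup' (f · z) (Finset.mem_univ j)⟩

lemma le_gronwallBound_of_isGreatest {ι : Type*} [Fintype ι] {f f' : ι → ℝ → ℝ} {W : ℝ → ℝ}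
    {K ε a b : ℝ} (hab : a ≤ b) (hW : ∀ z, IsGreatest (range fun k => f k z) (W z))
    (hf : ∀ k, ∀ s ∈ Icc a b, HasDerivAt (f k) (f' k s) s)
    (bound : ∀ s ∈ Ico a b, ∀ k, f k s = W s → f' k s ≤ K * W s + ε) :
    W b ≤ gronwallBound (W a) K ε (b - a) := by
  refine le_gronwallBound_of_liminf_deriv_right_le (f' := fun s => K * W s + ε)
    (continuousOn_of_isGreatest hW fun k s hs => (hf k s hs).continuousAt.continuousWithinAt)
    (fun s hs r hr => frequently_slope_lt_of_isGreatest hW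
      (fun k => hf k s (Ico_subset_Icc_self hs)) fun k hk => (bound s hs k hk).trans_lt hr)
    le_rfl (fun _ _ => le_rfl) b (right_mem_Icc.mpr hab)

lemma gronwallBound_neg_mul {κ : ℝ} (hκ : κ ≠ 0) (δ C x : ℝ) :
    gronwallBound δ (-κ) (κ * C) x = Real.exp (-κ * x) * δ + (1 - Real.exp (-κ * x)) * C := by
  rw [gronwallBound_of_K_ne_0 (neg_ne_zero.mpr hκ)]
  field_simp
  ring

theorem maximal_velocity_bound_general (N : ℕ) (σ : ℝ)
    (ψ : ℝ → ℝ)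
    (x v : Fin N → ℝ → Fin 3 → ℝ)
    (hsph : ∀ i, ∀ s : ℝ, 0 ≤ s → enorm3 (x i s) = 1)
    (htan : ∀ i, ∀ s : ℝ, 0 ≤ s → (x i s) ⬝ᵥ (v i s) = 0)
    (hanti : ∀ i k, ∀ s : ℝ, 0 ≤ s → x i s ≠ -(x k s))
    (hode2 : ∀ i, ∀ s : ℝ, 0 ≤ s → HasDerivAt (v i)
      ((-(enorm3 (v i s))^2) • x i s
        + (N : ℝ)⁻¹ • ∑ k, ψ (enorm3 (x i s - x k s)) •
            (rotApply (x k s) (x i s) (v k s) - v i s)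
        + (σ / N) • ∑ k, (x k s - ((x i s) ⬝ᵥ (x k s)) • x i s)) s)
    (t : ℝ) (ht : 0 < t) (ψm : ℝ) (hψm : 0 < ψm)
    (hψlow : ∀ i j : Fin N, ∀ s ∈ Set.Icc (0:ℝ) t, ψm ≤ ψ (enorm3 (x i s - x j s)))
    (V Dx EK : ℝ → ℝ)
    (hV : ∀ s, IsGreatest (Set.range fun k => enorm3 (v k s)) (V s))
    (hDx : ∀ s, IsGreatest
      (Set.range fun p : Fin N × Fin N => enorm3 (x p.1 s - x p.2 s)) (Dx s))
    (hEK : ∀ s, EK s = (N : ℝ)⁻¹ * ∑ k, (enorm3 (v k s))^2) :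
    (V t)^2 ≤ Real.exp (-(ψm / 2) * t) * (V 0)^2
      + (1 - Real.exp (-(ψm / 2) * t)) *
        (2 * sSup (EK '' Set.Icc 0 t)
          + 4 * σ^2 / ψm^2 * sSup ((fun s => (Dx s)^2) '' Set.Icc 0 t)) := by
  have hspeed : ∀ k, ∀ s ∈ Icc 0 t, HasDerivAt (fun s => v k s ⬝ᵥ v k s)
      (2 * (v k s ⬝ᵥ flockingField ψ σ (x · s) (v · s) k)) s :=
    fun k s hs => (hode2 k s hs.1).dotProduct_self
  have hEK_le : ∀ s ∈ Icc 0 t, EK s ≤ sSup (EK '' Icc 0 t) := by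
    have hcont : ContinuousOn EK (Icc 0 t) := by
      refine (continuousOn_const.mul (continuousOn_finsetSum _ fun k _ => ?_)).congr
        fun s _ => hEK s
      simp only [enorm3_sq]
      exact fun s hs => (hspeed k s hs).continuousAt.continuousWithinAt
    exact fun s hs => le_csSup (isCompact_Icc.bddAbove_image hcont) (mem_image_of_mem EK hs)
  have hDx_le : ∀ s ∈ Icc 0 t, Dx s ^ 2 ≤ sSup ((fun s => Dx s ^ 2) '' Icc 0 t) := by
    refine fun s hs => le_csSup ⟨2 ^ 2, ?_⟩ (mem_image_of_mem _ hs)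
    rintro _ ⟨s, hs, rfl⟩
    obtain ⟨⟨i, j⟩, hij⟩ := (hDx s).1
    show Dx s ^ 2 ≤ 2 ^ 2
    rw [← hij]
    exact pow_le_pow_left₀ (enorm3_nonneg _) (enorm3_sub_le_two (hsph i s hs.1) (hsph j s hs.1)) 2
  have hW s := isGreatest_range_dotProduct_self (hV s)
  have key := le_gronwallBound_of_isGreatest (K := -(ψm / 2)) (ε := ψm / 2 *
      (2 * sSup (EK '' Icc 0 t) + 4 * σ ^ 2 / ψm ^ 2 * sSup ((fun s => Dx s ^ 2) '' Icc 0 t)))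
    ht.le hW hspeed fun s hs k hk => ?_
  · rwa [gronwallBound_neg_mul (by positivity), sub_zero] at key
  have hs' := Ico_subset_Icc_self hs
  calc 2 * (v k s ⬝ᵥ flockingField ψ σ (x · s) (v · s) k)
      ≤ -(ψm / 2) * (v k s ⬝ᵥ v k s) + ψm / 2 * (2 * EK s + 4 * σ ^ 2 / ψm ^ 2 * Dx s ^ 2) := by
        refine two_mul_dotProduct_flockingField_le ψ σ _ _ k hψm
          (fun j => by rw [← enorm3_sq, hsph j s hs.1, one_pow])
          (by rw [dotProduct_comm]; exact htan k s hs.1) (fun j => hanti j k s hs.1)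
          (fun j => hψlow k j s hs') (fun j => hk ▸ (hW s).2 ⟨j, rfl⟩)
          (fun j => (hDx s).2 ⟨(j, k), rfl⟩) ?_
        simp only [hEK, enorm3_sq, le_refl]
    _ ≤ _ := by
        rw [hk]
        gcongr
        exacts [hEK_le s hs', hDx_le s hs']

/-- Uniform bound for the maximal velocity of the Cucker–Smale type
flocking model on the unit sphere with inter-particle bonding force: if
`ψ_{ij}(s) ≥ ψ_m > 0` on `[0,t]`, then
`𝒱²(t) ≤ e^{−ψ_m t/2} 𝒱²(0) + (1 − e^{−ψ_m t/2})(2 sup_{[0,t]} E_K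
  + (4σ²/ψ_m²) sup_{[0,t]} 𝒟ₓ²)`. -/
theorem maximal_velocity_bound (N : ℕ) (hN : 1 ≤ N) (σ : ℝ) (hσ : 0 < σ)
    (ψ : ℝ → ℝ) (hψreg : ContDiffOn ℝ 1 ψ (Set.Icc 0 2))
    (hψnn : ∀ s ∈ Set.Icc (0:ℝ) 2, 0 ≤ ψ s)
    (hψanti : StrictAntiOn ψ (Set.Icc 0 2)) (hψ2 : ψ 2 = 0)
    (x v : Fin N → ℝ → Fin 3 → ℝ)
    (hsph : ∀ i, ∀ s : ℝ, 0 ≤ s → enorm3 (x i s) = 1)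
    (htan : ∀ i, ∀ s : ℝ, 0 ≤ s → (x i s) ⬝ᵥ (v i s) = 0)
    (hanti : ∀ i k, ∀ s : ℝ, 0 ≤ s → x i s ≠ -(x k s))
    (hode1 : ∀ i, ∀ s : ℝ, 0 ≤ s → HasDerivAt (x i) (v i s) s)
    (hode2 : ∀ i, ∀ s : ℝ, 0 ≤ s → HasDerivAt (v i)
      ((-(enorm3 (v i s))^2) • x i s
        + (N : ℝ)⁻¹ • ∑ k, ψ (enorm3 (x i s - x k s)) •
            (rotApply (x k s) (x i s) (v k s) - v i s)
        + (σ / N) • ∑ k, (x k s - ((x i s) ⬝ᵥ (x k s)) • x i s)) s)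
    (t : ℝ) (ht : 0 < t) (ψm : ℝ) (hψm : 0 < ψm)
    (hψlow : ∀ i j : Fin N, ∀ s ∈ Set.Icc (0:ℝ) t, ψm ≤ ψ (enorm3 (x i s - x j s)))
    (V Dx EK : ℝ → ℝ)
    (hV : ∀ s, IsGreatest (Set.range fun k => enorm3 (v k s)) (V s))
    (hDx : ∀ s, IsGreatest
      (Set.range fun p : Fin N × Fin N => enorm3 (x p.1 s - x p.2 s)) (Dx s))
    (hEK : ∀ s, EK s = (N : ℝ)⁻¹ * ∑ k, (enorm3 (v k s))^2) :
    (V t)^2 ≤ Real.exp (-(ψm / 2) * t) * (V 0)^2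
      + (1 - Real.exp (-(ψm / 2) * t)) *
        (2 * sSup (EK '' Set.Icc 0 t)
          + 4 * σ^2 / ψm^2 * sSup ((fun s => (Dx s)^2) '' Set.Icc 0 t)) :=
  maximal_velocity_bound_general N σ ψ x v hsph htan hanti hode2 t ht ψm hψm hψlow V Dx EK hV hDx
    hEK
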